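/- Let A, B, C be real random variables. Suppose sup_{z∈ℝ} |P(A ≤ z) − Φ(z)| ≤ ε_A and P(|B| ≤ δ_B, |C| ≤ δ_C) ≥ 1 − ε_{BC} for some ε_A, ε_{BC}, δ_B, δ_C ∈ [0,1). Then sup_{z∈ℝ} |P((A+B)/(1+C) ≤ z) − Φ(z)| ≤ δ_B + δ_C/(1−δ_C) + ε_A + ε_{BC}. -/

import Mathlib

open MeasureTheory ProbabilityTheory

/-- The standard normal cumulative distribution function. -/
noncomputable def stdNormalCDF (z : ℝ) : ℝ := ((gaussianReal 0 1) (Set.Iic z)).toReal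

/-!
On the event `E = {|B| ≤ δ_B, |C| ≤ δ_C}`, whose complement has probability at most `ε_BC`,
we have `1 + C > 0` and `z (1 + C) - B` lies within `|z| δ_C + δ_B` of `z`; hence
`P(A ≤ z - |z| δ_C - δ_B) - ε_BC ≤ P((A + B)/(1 + C) ≤ z) ≤ P(A ≤ z + |z| δ_C + δ_B) + ε_BC`.
It remains to bound how much `Φ` moves under these shifts: the `δ_B` part because `φ ≤ 1`,
and the `|z| δ_C` part because `φ` decreases in `|x|` and `|x| φ(x) ≤ 1`.
-/

section GaussianBounds

open Real

lemma gaussianPDFReal_zero_one_eq (x : ℝ) :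
    gaussianPDFReal 0 1 x = (√(2 * π))⁻¹ * exp (-x ^ 2 / 2) := by
  simp only [gaussianPDFReal, NNReal.coe_one, mul_one, sub_zero]

lemma inv_sqrt_two_pi_le_one : (√(2 * π))⁻¹ ≤ 1 :=
  inv_le_one_of_one_le₀ (one_le_sqrt.mpr (by linarith [pi_gt_three]))

lemma gaussianPDFReal_zero_one_le_of_abs_le {x y : ℝ} (h : |x| ≤ |y|) :
    gaussianPDFReal 0 1 y ≤ gaussianPDFReal 0 1 x := by
  rw [gaussianPDFReal_zero_one_eq, gaussianPDFReal_zero_one_eq]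
  exact mul_le_mul_of_nonneg_left (exp_le_exp.mpr (by nlinarith [sq_le_sq.mpr h]))
    (by positivity)

lemma gaussianPDFReal_zero_one_le_one (x : ℝ) : gaussianPDFReal 0 1 x ≤ 1 :=
  calc gaussianPDFReal 0 1 x ≤ gaussianPDFReal 0 1 0 :=
        gaussianPDFReal_zero_one_le_of_abs_le (by simp)
    _ ≤ 1 := by simpa [gaussianPDFReal_zero_one_eq] using inv_sqrt_two_pi_le_one

lemma abs_mul_gaussianPDFReal_zero_one_le_one (x : ℝ) : |x| * gaussianPDFReal 0 1 x ≤ 1 := by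
  have hx : |x| ≤ exp (x ^ 2 / 2) := by
    nlinarith [add_one_le_exp (x ^ 2 / 2), sq_abs x, sq_nonneg (|x| - 1)]
  have hx' : |x| * exp (-x ^ 2 / 2) ≤ 1 := by
    rw [neg_div, exp_neg, ← div_eq_mul_inv, div_le_one (exp_pos _)]
    exact hx
  rw [gaussianPDFReal_zero_one_eq, mul_left_comm]
  exact mul_le_one₀ inv_sqrt_two_pi_le_one (by positivity) hx'

end GaussianBounds

lemma stdNormalCDF_eq_integral (z : ℝ) :
    stdNormalCDF z = ∫ x in Set.Iic z, gaussianPDFReal 0 1 x := by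
  rw [stdNormalCDF, gaussianReal_apply_eq_integral 0 one_ne_zero, ENNReal.toReal_ofReal
    (setIntegral_nonneg measurableSet_Iic fun x _ => gaussianPDFReal_nonneg 0 1 x)]

lemma stdNormalCDF_sub_eq_integral {a b : ℝ} (hab : a ≤ b) :
    stdNormalCDF b - stdNormalCDF a = ∫ x in Set.Ioc a b, gaussianPDFReal 0 1 x := by
  rw [stdNormalCDF_eq_integral, stdNormalCDF_eq_integral, ← Set.Iic_union_Ioc_eq_Iic hab,
    setIntegral_union (Set.Iic_disjoint_Ioc le_rfl) measurableSet_Ioc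
      (integrable_gaussianPDFReal 0 1).integrableOn (integrable_gaussianPDFReal 0 1).integrableOn]
  ring

lemma stdNormalCDF_sub_le_mul {a b M : ℝ} (hab : a ≤ b)
    (hM : ∀ x ∈ Set.Ioc a b, gaussianPDFReal 0 1 x ≤ M) :
    stdNormalCDF b - stdNormalCDF a ≤ (b - a) * M := by
  rw [stdNormalCDF_sub_eq_integral hab]
  calc ∫ x in Set.Ioc a b, gaussianPDFReal 0 1 x ≤ ∫ _ in Set.Ioc a b, M :=
        setIntegral_mono_on (integrable_gaussianPDFReal 0 1).integrableOn
          (integrableOn_const measure_Ioc_lt_top.ne) measurableSet_Ioc hM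
    _ = (b - a) * M := by rw [setIntegral_const, Real.volume_real_Ioc_of_le hab, smul_eq_mul]

lemma stdNormalCDF_sub_le_sub {a b : ℝ} (hab : a ≤ b) :
    stdNormalCDF b - stdNormalCDF a ≤ b - a := by
  simpa using stdNormalCDF_sub_le_mul hab fun x _ => gaussianPDFReal_zero_one_le_one x

lemma stdNormalCDF_sub_le_of_sub_eq_mul_abs {a b m c : ℝ} (hc : 0 ≤ c)
    (hm : ∀ x ∈ Set.Ioc a b, |m| ≤ |x|) (hba : b - a = c * |m|) :
    stdNormalCDF b - stdNormalCDF a ≤ c :=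
  calc stdNormalCDF b - stdNormalCDF a ≤ (b - a) * gaussianPDFReal 0 1 m :=
        stdNormalCDF_sub_le_mul (by nlinarith [abs_nonneg m])
          fun x hx => gaussianPDFReal_zero_one_le_of_abs_le (hm x hx)
    _ = c * (|m| * gaussianPDFReal 0 1 m) := by rw [hba, mul_assoc]
    _ ≤ c := mul_le_of_le_one_right hc (abs_mul_gaussianPDFReal_zero_one_le_one m)

section Perturbation

variable {z δ : ℝ}

lemma le_div_one_sub_self (hδ0 : 0 ≤ δ) (hδ1 : δ < 1) : δ ≤ δ / (1 - δ) :=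
  le_div_self hδ0 (by linarith) (by linarith)

lemma stdNormalCDF_add_abs_mul_sub_le (hδ0 : 0 ≤ δ) (hδ1 : δ < 1) :
    stdNormalCDF (z + |z| * δ) - stdNormalCDF z ≤ δ / (1 - δ) := by
  have hδ : 0 < 1 - δ := by linarith
  rcases le_or_gt 0 z with hz | hz
  · rw [abs_of_nonneg hz]
    refine (stdNormalCDF_sub_le_of_sub_eq_mul_abs (m := z) hδ0 (fun x hx => ?_) ?_).trans
      (le_div_one_sub_self hδ0 hδ1)
    · rw [abs_of_nonneg hz, abs_of_pos (hz.trans_lt hx.1)]; exact hx.1.le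
    · rw [abs_of_nonneg hz]; ring
  · rw [abs_of_neg hz]
    have hm : z * (1 - δ) ≤ 0 := mul_nonpos_of_nonpos_of_nonneg hz.le hδ.le
    refine stdNormalCDF_sub_le_of_sub_eq_mul_abs (m := z * (1 - δ)) (by positivity)
      (fun x hx => ?_) ?_
    · rw [abs_of_nonpos hm, abs_of_nonpos (by linarith [hx.2])]; linarith [hx.2]
    · rw [abs_of_nonpos hm]; field_simp; ring

lemma stdNormalCDF_sub_sub_abs_mul_le (hδ0 : 0 ≤ δ) (hδ1 : δ < 1) :
    stdNormalCDF z - stdNormalCDF (z - |z| * δ) ≤ δ / (1 - δ) := by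
  have hδ : 0 < 1 - δ := by linarith
  rcases le_or_gt 0 z with hz | hz
  · rw [abs_of_nonneg hz]
    have hm : 0 ≤ z * (1 - δ) := mul_nonneg hz hδ.le
    refine stdNormalCDF_sub_le_of_sub_eq_mul_abs (m := z * (1 - δ)) (by positivity)
      (fun x hx => ?_) ?_
    · rw [abs_of_nonneg hm, abs_of_nonneg (by linarith [hx.1])]; linarith [hx.1]
    · rw [abs_of_nonneg hm]; field_simp; ring
  · rw [abs_of_neg hz]
    refine (stdNormalCDF_sub_le_of_sub_eq_mul_abs (m := z) hδ0 (fun x hx => ?_) ?_).trans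
      (le_div_one_sub_self hδ0 hδ1)
    · rw [abs_of_neg hz, abs_of_neg (hx.2.trans_lt hz)]; linarith [hx.2]
    · rw [abs_of_neg hz]; ring

lemma stdNormalCDF_add_abs_mul_add_sub_le {ε : ℝ} (hδ0 : 0 ≤ δ) (hδ1 : δ < 1) (hε : 0 ≤ ε) :
    stdNormalCDF (z + |z| * δ + ε) - stdNormalCDF z ≤ ε + δ / (1 - δ) := by
  linarith [stdNormalCDF_sub_le_sub (a := z + |z| * δ) (b := z + |z| * δ + ε) (by linarith),
    stdNormalCDF_add_abs_mul_sub_le (z := z) hδ0 hδ1]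

lemma stdNormalCDF_sub_sub_sub_abs_mul_le {ε : ℝ} (hδ0 : 0 ≤ δ) (hδ1 : δ < 1) (hε : 0 ≤ ε) :
    stdNormalCDF z - stdNormalCDF (z - |z| * δ - ε) ≤ ε + δ / (1 - δ) := by
  linarith [stdNormalCDF_sub_le_sub (a := z - |z| * δ - ε) (b := z - |z| * δ) (by linarith),
    stdNormalCDF_sub_sub_abs_mul_le (z := z) hδ0 hδ1]

end Perturbation

section Ratio

variable {a b c z δB δC : ℝ}

lemma le_add_abs_mul_add_of_add_div_one_add_le (hb : |b| ≤ δB) (hc : |c| ≤ δC) (hδC : δC < 1)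
    (h : (a + b) / (1 + c) ≤ z) : a ≤ z + |z| * δC + δB := by
  have hc' : 0 < 1 + c := by linarith [neg_abs_le c]
  have hzc : |z * c| ≤ |z| * δC := by rw [abs_mul]; gcongr
  linarith [(div_le_iff₀ hc').mp h, (abs_le.mp hb).1, (abs_le.mp hzc).2]

lemma add_div_one_add_le_of_le_sub_abs_mul_sub (hb : |b| ≤ δB) (hc : |c| ≤ δC) (hδC : δC < 1)
    (h : a ≤ z - |z| * δC - δB) : (a + b) / (1 + c) ≤ z := by
  have hc' : 0 < 1 + c := by linarith [neg_abs_le c]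
  have hzc : |z * c| ≤ |z| * δC := by rw [abs_mul]; gcongr
  rw [div_le_iff₀ hc']
  linarith [(abs_le.mp hb).2, (abs_le.mp hzc).1]

end Ratio

lemma measureReal_le_add_measureReal_compl {Ω : Type*} [MeasurableSpace Ω] {μ : Measure Ω}
    [IsFiniteMeasure μ] {s t e : Set Ω} (h : s ∩ e ⊆ t) : μ.real s ≤ μ.real t + μ.real eᶜ :=
  calc μ.real s ≤ μ.real (t ∪ eᶜ) :=
        measureReal_mono fun ω hω => (em (ω ∈ e)).imp (fun he => h ⟨hω, he⟩) id
    _ ≤ μ.real t + μ.real eᶜ := measureReal_union_le t eᶜ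

theorem gaussian_approx_combination_general
    {Ω : Type*} [MeasurableSpace Ω] (μ : Measure Ω) [IsProbabilityMeasure μ]
    (A B C : Ω → ℝ) (hB : Measurable B) (hC : Measurable C)
    (εA εBC δB δC : ℝ)
    (hδB0 : 0 ≤ δB)
    (hδC0 : 0 ≤ δC) (hδC1 : δC < 1)
    (h1 : ∀ z : ℝ, |(μ {ω | A ω ≤ z}).toReal - stdNormalCDF z| ≤ εA)
    (h2 : 1 - εBC ≤ (μ {ω | |B ω| ≤ δB ∧ |C ω| ≤ δC}).toReal) :
    ∀ z : ℝ, |(μ {ω | (A ω + B ω) / (1 + C ω) ≤ z}).toReal - stdNormalCDF z|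
      ≤ δB + δC / (1 - δC) + εA + εBC := by
  intro z
  set E := {ω | |B ω| ≤ δB ∧ |C ω| ≤ δC}
  have hEm : MeasurableSet E :=
    (measurableSet_le hB.abs measurable_const).inter (measurableSet_le hC.abs measurable_const)
  have hE : μ.real Eᶜ ≤ εBC := by
    rw [probReal_compl_eq_one_sub hEm, measureReal_def]
    linarith
  have hupper := measureReal_le_add_measureReal_compl (μ := μ) (e := E)
    (s := {ω | (A ω + B ω) / (1 + C ω) ≤ z}) (t := {ω | A ω ≤ z + |z| * δC + δB})
    fun ω ⟨hS, hb, hc⟩ => le_add_abs_mul_add_of_add_div_one_add_le hb hc hδC1 hS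
  have hlower := measureReal_le_add_measureReal_compl (μ := μ) (e := E)
    (s := {ω | A ω ≤ z - |z| * δC - δB}) (t := {ω | (A ω + B ω) / (1 + C ω) ≤ z})
    fun ω ⟨hS, hb, hc⟩ => add_div_one_add_le_of_le_sub_abs_mul_sub hb hc hδC1 hS
  simp only [measureReal_def] at hE hupper hlower
  have hΦu := stdNormalCDF_add_abs_mul_add_sub_le (z := z) hδC0 hδC1 hδB0
  have hΦl := stdNormalCDF_sub_sub_sub_abs_mul_le (z := z) hδC0 hδC1 hδB0
  have hAu := abs_le.mp (h1 (z + |z| * δC + δB))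
  have hAl := abs_le.mp (h1 (z - |z| * δC - δB))
  rw [abs_le]
  constructor <;> linarith

/-- Lemma D.3 of Barber & Kolar: if
`sup_z |P(A ≤ z) − Φ(z)| ≤ ε_A` and `P(|B| ≤ δ_B, |C| ≤ δ_C) ≥ 1 − ε_{BC}`
with `ε_A, ε_{BC}, δ_B, δ_C ∈ [0,1)`, then
`sup_z |P((A+B)/(1+C) ≤ z) − Φ(z)| ≤ δ_B + δ_C/(1−δ_C) + ε_A + ε_{BC}`. -/
theorem gaussian_approx_combination
    {Ω : Type*} [MeasurableSpace Ω] (μ : Measure Ω) [IsProbabilityMeasure μ]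
    (A B C : Ω → ℝ) (hA : Measurable A) (hB : Measurable B) (hC : Measurable C)
    (εA εBC δB δC : ℝ)
    (hεA0 : 0 ≤ εA) (hεA1 : εA < 1)
    (hεBC0 : 0 ≤ εBC) (hεBC1 : εBC < 1)
    (hδB0 : 0 ≤ δB) (hδB1 : δB < 1)
    (hδC0 : 0 ≤ δC) (hδC1 : δC < 1)
    (h1 : ∀ z : ℝ, |(μ {ω | A ω ≤ z}).toReal - stdNormalCDF z| ≤ εA)
    (h2 : 1 - εBC ≤ (μ {ω | |B ω| ≤ δB ∧ |C ω| ≤ δC}).toReal) :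
    ∀ z : ℝ, |(μ {ω | (A ω + B ω) / (1 + C ω) ≤ z}).toReal - stdNormalCDF z|
      ≤ δB + δC / (1 - δC) + εA + εBC :=
  gaussian_approx_combination_general μ A B C hB hC εA εBC δB δC hδB0 hδC0 hδC1 h1 h2
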